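/- arXiv:1309.0893 — 2 statements merged into one kernel-verified Lean document; each statement's English description precedes it below -/
import Mathlib

section
/- Let K be a μ-continuous Chomsky algebra and σ : T X → K an interpretation over K. Then for every μ-expression t ∈ T X, the supremum sup{σ̄(w) : w ∈ L_X(t)} exists in K and equals σ(t). -/
/-- μ-expressions over a set `X` of variables:
`t ::= x | t + t | t·t | 0 | 1 | μx.t`. -/
inductive MuTerm (X : Type) : Type
  | var : X → MuTerm X
  | zero : MuTerm X
  | one : MuTerm X
  | add : MuTerm X → MuTerm X → MuTerm X
  | mul : MuTerm X → MuTerm X → MuTerm X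
  | mu : X → MuTerm X → MuTerm X

namespace MuTerm

variable {X : Type}

/-- Size of a term (used for termination of substitution). -/
def size : MuTerm X → ℕ
  | var _ => 1
  | zero => 1
  | one => 1
  | add s t => size s + size t + 1
  | mul s t => size s + size t + 1
  | mu _ t => size t + 1

variable [DecidableEq X]

/-- Free variables of a μ-expression. -/
def fv : MuTerm X → Finset X
  | var x => {x}
  | zero => ∅
  | one => ∅
  | add s t => fv s ∪ fv t
  | mul s t => fv s ∪ fv t
  | mu x t => fv t \ {x}

/-- All (free and bound) variables of a μ-expression. -/
def vars : MuTerm X → Finset X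
  | var x => {x}
  | zero => ∅
  | one => ∅
  | add s t => vars s ∪ vars t
  | mul s t => vars s ∪ vars t
  | mu x t => insert x (vars t)

/-- Rename free occurrences of the variable `y` to `z`. -/
def rename (y z : X) : MuTerm X → MuTerm X
  | var x => if x = y then var z else var x
  | zero => zero
  | one => one
  | add s t => add (rename y z s) (rename y z t)
  | mul s t => mul (rename y z s) (rename y z t)
  | mu x t => if x = y then mu x t else mu x (rename y z t)

theorem size_rename (y z : X) : ∀ t : MuTerm X, (rename y z t).size = t.size
  | var x => by simp only [rename]; split <;> rfl
  | zero => rfl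
  | one => rfl
  | add s t => by simp [rename, size, size_rename y z s, size_rename y z t]
  | mul s t => by simp [rename, size, size_rename y z s, size_rename y z t]
  | mu x t => by
      simp only [rename]; split
      · rfl
      · simp [size, size_rename y z t]

variable [Infinite X]

/-- Capture-avoiding substitution `t[x := u]`: substitute `u` for the free
occurrences of `x` in the last argument, renaming bound variables to fresh
ones to avoid capture. -/
noncomputable def subst (x : X) (u : MuTerm X) : MuTerm X → MuTerm X
  | var y => if y = x then u else var y
  | zero => zero
  | one => one
  | add s t => add (subst x u s) (subst x u t)
  | mul s t => mul (subst x u s) (subst x u t)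
  | mu y t =>
    if y = x then mu y t
    else
      let z : X := Classical.choose (Infinite.exists_notMem_finset (vars t ∪ fv u ∪ {x}))
      mu z (subst x u (rename y z t))
  termination_by t => size t
  decreasing_by
    all_goals simp only [size, size_rename]
    all_goals omega

/-- The `n`-th approximant `nx.t`: `0x.t = 0`, `(n+1)x.t = t[x := nx.t]`. -/
noncomputable def napprox : ℕ → X → MuTerm X → MuTerm X
  | 0, _, _ => zero
  | n + 1, x, t => subst x (napprox n x t) t

end MuTerm

/-- Polynomial functions over a semiring `C` in `n` indeterminates: functions
built from constants in `C`, projections, addition, and multiplication. -/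
inductive IsPolyFun {C : Type} [Semiring C] : {n : ℕ} → ((Fin n → C) → C) → Prop
  | const {n : ℕ} (c : C) : IsPolyFun fun _ : Fin n → C => c
  | proj {n : ℕ} (i : Fin n) : IsPolyFun fun v => v i
  | add {n : ℕ} {p q : (Fin n → C) → C} :
      IsPolyFun p → IsPolyFun q → IsPolyFun fun v => p v + q v
  | mul {n : ℕ} {p q : (Fin n → C) → C} :
      IsPolyFun p → IsPolyFun q → IsPolyFun fun v => p v * q v

/-- A Chomsky algebra is an idempotent semiring (ordered by `a ≤ b ↔ a + b = b`)
in which every finite system of polynomial inequalities `pᵢ ≤ xᵢ` has a least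
solution. -/
class ChomskyAlgebra (C : Type) extends IdemSemiring C where
  algClosed : ∀ {n : ℕ} (p : Fin n → (Fin n → C) → C), (∀ i, IsPolyFun (p i)) →
    ∃ sol : Fin n → C, (∀ i, p i sol ≤ sol i) ∧
      ∀ τ : Fin n → C, (∀ i, p i τ ≤ τ i) → ∀ i, sol i ≤ τ i

/-- `IsInterp eval` says that `eval` is the family of interpretations of
μ-expressions over the Chomsky algebra `C`, one for each valuation `v : X → C`:
each `eval v` is a homomorphism with respect to the semiring operations, and
`eval v (μx.t)` is the least `a` with `eval v[x↦a] t ≤ a`. -/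
structure IsInterp {X C : Type} [DecidableEq X] [Infinite X] [ChomskyAlgebra C]
    (eval : (X → C) → MuTerm X → C) : Prop where
  var : ∀ (v : X → C) (x : X), eval v (.var x) = v x
  zero : ∀ v, eval v .zero = 0
  one : ∀ v, eval v .one = 1
  add : ∀ v s t, eval v (.add s t) = eval v s + eval v t
  mul : ∀ v s t, eval v (.mul s t) = eval v s * eval v t
  mu : ∀ (v : X → C) (x : X) (t : MuTerm X),
    IsLeast {a : C | eval (Function.update v x a) t ≤ a} (eval v (.mu x t))

/-- A Chomsky algebra `C` is μ-continuous if for every interpretation `σ` over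
`C`, all `c, d ∈ C`, and every term `t`,
`c·σ(μx.t)·d = sup_{n ≥ 0} c·σ(nx.t)·d` (in particular the supremum exists). -/
def MuContinuous (C : Type) [ChomskyAlgebra C] : Prop :=
  ∀ (X : Type) [DecidableEq X] [Infinite X] (eval : (X → C) → MuTerm X → C),
    IsInterp eval → ∀ (v : X → C) (c d : C) (x : X) (t : MuTerm X),
      IsLUB (Set.range fun n : ℕ => c * eval v (MuTerm.napprox n x t) * d)
        (c * eval v (.mu x t) * d)

/-- A language interpretation `τ : T X → P(Y*)`: a homomorphism for the
semiring operations on languages with `τ(μx.t) = ⋃ n, τ(nx.t)`. -/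
structure IsLangInterp {X Y : Type} [DecidableEq X] [Infinite X]
    (τ : MuTerm X → Language Y) : Prop where
  zero : τ .zero = 0
  one : τ .one = 1
  add : ∀ s t, τ (.add s t) = τ s + τ t
  mul : ∀ s t, τ (.mul s t) = τ s * τ t
  mu : ∀ (x : X) (t : MuTerm X), τ (.mu x t) = ⨆ n : ℕ, τ (MuTerm.napprox n x t)

/-- The canonical interpretation `L_X : T X → P(X*)`: the language
interpretation with `L_X(x) = {x}`. -/
def IsCanonicalInterp {X : Type} [DecidableEq X] [Infinite X]
    (L : MuTerm X → Language X) : Prop :=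
  IsLangInterp L ∧ ∀ x : X, L (.var x) = {[x]}

/-- For a word `w = x₁⋯x_k ∈ X*` and `σ : X → K`, `wordProd σ w` is the
product `σ(x₁)⋯σ(x_k)` in `K`, with the empty word mapped to `1`. -/
def wordProd {X K : Type} [Monoid K] (σ : X → K) (w : List X) : K :=
  (w.map σ).prod

/-- `IsLangEval E` says that `E` is the family of structurally induced language
interpretations, one for each assignment `σ : X → P(Y*)` of languages to
variables: each `E σ` is a homomorphism for the semiring operations on
languages, with `E σ (μx.t) = ⋃ n, E σ (nx.t)`. -/
structure IsLangEval {X Y : Type} [DecidableEq X] [Infinite X]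
    (E : (X → Language Y) → MuTerm X → Language Y) : Prop where
  var : ∀ (σ : X → Language Y) (x : X), E σ (.var x) = σ x
  zero : ∀ σ, E σ .zero = 0
  one : ∀ σ, E σ .one = 1
  add : ∀ σ s t, E σ (.add s t) = E σ s + E σ t
  mul : ∀ σ s t, E σ (.mul s t) = E σ s * E σ t
  mu : ∀ (σ : X → Language Y) (x : X) (t : MuTerm X),
    E σ (.mu x t) = ⨆ n : ℕ, E σ (MuTerm.napprox n x t)

/-!
Structural induction on `t` fails at `μx.t`, whose language is the union of the languages of
the approximants `nx.t`, which are not subterms. They are smaller for an ordinal rank, though: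
ranking `μx.t` just above all iterates `f^[n] 0`, where `f a` is the rank of `t` with `x` ranked
`a`, works because `t[x := u]` ranks like `t` with `x` ranked as `u`. Induction on this rank
proves the context-closed statement `c·σ(t)·d = sup {c·σ̄(w)·d : w ∈ L(t)}`; the contexts are
what make the product case go through, and the `μ` case is μ-continuity.
-/

namespace MuTerm

variable {X : Type} [DecidableEq X]

theorem fv_subset_vars : ∀ t : MuTerm X, fv t ⊆ vars t
  | var _ | zero | one => by simp [fv, vars]
  | add s t | mul s t => Finset.union_subset_union (fv_subset_vars s) (fv_subset_vars t)
  | mu x t => fun _ hy =>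
      Finset.mem_insert_of_mem (fv_subset_vars t (Finset.mem_sdiff.1 hy).1)

noncomputable def rank : MuTerm X → (X → Ordinal.{0}) → Ordinal.{0}
  | var x, ρ => ρ x
  | zero, _ | one, _ => 0
  | add s t, ρ | mul s t, ρ => max (rank s ρ) (rank t ρ) + 1
  | mu x t, ρ => (⨆ n : ℕ, (fun a => rank t (Function.update ρ x a))^[n] 0) + 1

theorem rank_congr : ∀ (t : MuTerm X) {ρ ρ' : X → Ordinal}, (∀ y ∈ fv t, ρ y = ρ' y) →
    rank t ρ = rank t ρ'
  | var x, _, _, h => h x (by simp [fv])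
  | zero, _, _, _ | one, _, _, _ => rfl
  | add s t, _, _, h | mul s t, _, _, h => by
      simp only [rank, rank_congr s fun y hy => h y (by simp [fv, hy]),
        rank_congr t fun y hy => h y (by simp [fv, hy])]
  | mu x t, ρ, ρ', h => by
      have : ∀ a, rank t (Function.update ρ x a) = rank t (Function.update ρ' x a) := by
        refine fun a => rank_congr t fun y hy => ?_
        by_cases hyx : y = x
        · simp [hyx]
        · simp only [Function.update_of_ne hyx]
          exact h y (by simp [fv, hy, hyx])
      simp only [rank, this]

theorem rank_rename : ∀ (t : MuTerm X) (ρ : X → Ordinal) {y z : X}, z ∉ vars t →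
    rank (rename y z t) ρ = rank t (Function.update ρ y (ρ z))
  | var p, ρ, y, z, _ => by
      by_cases hp : p = y <;> simp [rename, rank, hp]
  | zero, _, _, _, _ | one, _, _, _, _ => rfl
  | add s t, ρ, y, z, hz | mul s t, ρ, y, z, hz => by
      simp only [vars, Finset.mem_union, not_or] at hz
      simp only [rename, rank, rank_rename s ρ hz.1, rank_rename t ρ hz.2]
  | mu w t, ρ, y, z, hz => by
      simp only [vars, Finset.mem_insert, not_or] at hz
      by_cases hwy : w = y
      · subst hwy
        simp [rename, rank]
      · have : ∀ a, rank (rename y z t) (Function.update ρ w a) =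
            rank t (Function.update (Function.update ρ y (ρ z)) w a) := fun a => by
          rw [rank_rename t _ hz.2, Function.update_of_ne hz.1, Function.update_comm hwy]
        simp only [rename, if_neg hwy, rank, this]

variable [Infinite X]

/-- The variable that `subst x u` chooses to rename the binder of `μy.t`. -/
noncomputable def fresh (t u : MuTerm X) (x : X) : X :=
  Classical.choose (Infinite.exists_notMem_finset (vars t ∪ fv u ∪ {x}))

theorem fresh_spec (t u : MuTerm X) (x : X) :
    fresh t u x ∉ vars t ∧ fresh t u x ∉ fv u ∧ fresh t u x ≠ x := by
  have h : fresh t u x ∉ vars t ∪ fv u ∪ {x} :=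
    Classical.choose_spec (Infinite.exists_notMem_finset _)
  simp only [Finset.mem_union, Finset.mem_singleton, not_or] at h
  exact ⟨h.1.1, h.1.2, h.2⟩

theorem subst_mu_of_ne {x y : X} (u t : MuTerm X) (h : y ≠ x) :
    subst x u (mu y t) = mu (fresh t u x) (subst x u (rename y (fresh t u x) t)) := by
  rw [subst]
  simp [h, fresh]

theorem rank_subst (x : X) (u : MuTerm X) : ∀ (t : MuTerm X) (ρ : X → Ordinal),
    rank (subst x u t) ρ = rank t (Function.update ρ x (rank u ρ))
  | var p, ρ => by
      by_cases hp : p = x <;> simp [subst, rank, hp]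
  | zero, _ | one, _ => by simp [subst, rank]
  | add s t, ρ | mul s t, ρ => by
      simp only [subst, rank, rank_subst x u s ρ, rank_subst x u t ρ]
  | mu w t, ρ => by
      by_cases hwx : w = x
      · subst hwx
        simp [subst, rank]
      obtain ⟨hzt, hzu, hzx⟩ := fresh_spec t u x
      have : ∀ a, rank (subst x u (rename w (fresh t u x) t)) (Function.update ρ (fresh t u x) a)
          = rank t (Function.update (Function.update ρ x (rank u ρ)) w a) := fun a => by
        have hu : rank u (Function.update ρ (fresh t u x) a) = rank u ρ :=
          rank_congr u fun p hp => Function.update_of_ne (by rintro rfl; exact hzu hp) _ _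
        rw [rank_subst x u _, hu, rank_rename t _ hzt, Function.update_of_ne hzx,
          Function.update_self]
        refine rank_congr t fun p hp => ?_
        have hpz : p ≠ fresh t u x := by rintro rfl; exact hzt (fv_subset_vars t hp)
        by_cases hpw : p = w
        · simp [hpw]
        by_cases hpx : p = x
        · subst hpx; simp [hpw]
        · simp [hpw, hpx, hpz]
      simp only [subst_mu_of_ne u t hwx, rank, this]
termination_by t => t.size
decreasing_by all_goals simp only [size, size_rename]; omega

theorem rank_napprox (n : ℕ) (x : X) (t : MuTerm X) (ρ : X → Ordinal) :
    rank (napprox n x t) ρ = (fun a => rank t (Function.update ρ x a))^[n] 0 := by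
  induction n with
  | zero => rfl
  | succ n ih => rw [napprox, rank_subst, Function.iterate_succ_apply', ih]

theorem rank_napprox_lt (n : ℕ) (x : X) (t : MuTerm X) (ρ : X → Ordinal) :
    rank (napprox n x t) ρ < rank (mu x t) ρ := by
  rw [rank_napprox, rank, Order.lt_add_one_iff]
  exact le_ciSup Ordinal.bddAbove_of_small n

theorem induction_napprox {P : MuTerm X → Prop} (var : ∀ x, P (var x)) (zero : P zero)
    (one : P one) (add : ∀ s t, P s → P t → P (add s t))
    (mul : ∀ s t, P s → P t → P (mul s t))
    (mu : ∀ x t, (∀ n, P (napprox n x t)) → P (mu x t)) : ∀ t, P t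
  | .var x => var x
  | .zero => zero
  | .one => one
  | .add s t => add s t (induction_napprox var zero one add mul mu s)
      (induction_napprox var zero one add mul mu t)
  | .mul s t => mul s t (induction_napprox var zero one add mul mu s)
      (induction_napprox var zero one add mul mu t)
  | .mu x t => mu x t fun n => induction_napprox var zero one add mul mu (napprox n x t)
termination_by t => rank t fun _ => 0
decreasing_by
  all_goals first
    | exact rank_napprox_lt _ _ _ _
    | exact Order.lt_add_one_iff.2 (le_max_left _ _)
    | exact Order.lt_add_one_iff.2 (le_max_right _ _)

end MuTerm

theorem wordProd_append {X K : Type} [Monoid K] (v : X → K) (w₁ w₂ : List X) :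
    wordProd v (w₁ ++ w₂) = wordProd v w₁ * wordProd v w₂ := by
  simp [wordProd]

section IsLUBInContext

variable {X K : Type} [IdemSemiring K] {v : X → K}

def IsLUBInContext (v : X → K) (A : Language X) (a : K) : Prop :=
  ∀ c d : K, IsLUB ((fun w => c * wordProd v w * d) '' A) (c * a * d)

theorem isLUBInContext_singleton (w : List X) : IsLUBInContext v {w} (wordProd v w) :=
  fun c d => by
    show IsLUB (_ '' ({w} : Set (List X))) _
    rw [Set.image_singleton]
    exact isLUB_singleton

theorem isLUBInContext_zero : IsLUBInContext v 0 (0 : K) := fun c d => by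
  show IsLUB (_ '' (∅ : Set (List X))) _
  rw [Set.image_empty, mul_zero, zero_mul, ← bot_eq_zero]
  exact isLUB_empty

theorem isLUBInContext_one : IsLUBInContext v 1 (1 : K) := by
  have h := isLUBInContext_singleton (v := v) []
  rw [wordProd, List.map_nil, List.prod_nil] at h
  exact h

theorem IsLUBInContext.add {A B : Language X} {a b : K} (hA : IsLUBInContext v A a)
    (hB : IsLUBInContext v B b) : IsLUBInContext v (A + B) (a + b) := fun c d => by
  rw [mul_add, add_mul, add_eq_sup (c * a * d)]
  exact (Set.image_union _ A B).symm ▸ (hA c d).union (hB c d)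

theorem IsLUBInContext.mul {A B : Language X} {a b : K} (hA : IsLUBInContext v A a)
    (hB : IsLUBInContext v B b) : IsLUBInContext v (A * B) (a * b) := fun c d => by
  -- the supremum over `w₂` is taken in the context `c·σ̄(w₁), d`, then the one over `w₁` in `c, b·d`
  have hassoc : ∀ x y, c * (x * y) * d = c * x * (y * d) := fun x y => by noncomm_ring
  refine ⟨?_, fun u hu => ?_⟩
  · rintro _ ⟨_, ⟨w₁, hw₁, w₂, hw₂, rfl⟩, rfl⟩
    calc c * wordProd v (w₁ ++ w₂) * d = c * wordProd v w₁ * wordProd v w₂ * d := by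
          rw [wordProd_append, ← mul_assoc]
      _ ≤ c * wordProd v w₁ * b * d := (hB _ d).1 ⟨w₂, hw₂, rfl⟩
      _ = c * wordProd v w₁ * (b * d) := mul_assoc _ _ _
      _ ≤ c * a * (b * d) := (hA c _).1 ⟨w₁, hw₁, rfl⟩
      _ = c * (a * b) * d := (hassoc a b).symm
  · rw [hassoc]
    refine (hA c _).2 ?_
    rintro _ ⟨w₁, hw₁, rfl⟩
    show c * wordProd v w₁ * (b * d) ≤ u
    rw [← mul_assoc]
    refine (hB _ d).2 ?_
    rintro _ ⟨w₂, hw₂, rfl⟩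
    refine hu ⟨w₁ ++ w₂, Language.mem_mul.2 ⟨w₁, hw₁, w₂, hw₂, rfl⟩, ?_⟩
    simp only [wordProd_append, mul_assoc]

theorem isLUBInContext_iSup {A : ℕ → Language X} {a : ℕ → K} {b : K}
    (hA : ∀ n, IsLUBInContext v (A n) (a n))
    (hb : ∀ c d, IsLUB (Set.range fun n => c * a n * d) (c * b * d)) :
    IsLUBInContext v (⨆ n, A n) b := fun c d => by
  have h := (isLUB_iUnion_iff_of_isLUB (fun n => hA n c d) _).1 (hb c d)
  exact Set.image_iUnion.symm ▸ h

end IsLUBInContext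

theorem isLUBInContext_of_isInterp {X K : Type} [DecidableEq X] [Infinite X] [ChomskyAlgebra K]
    (hK : MuContinuous K) {eval : (X → K) → MuTerm X → K} (hσ : IsInterp eval) (v : X → K)
    {L : MuTerm X → Language X} (hL : IsCanonicalInterp L) (t : MuTerm X) :
    IsLUBInContext v (L t) (eval v t) := by
  obtain ⟨hLang, hLvar⟩ := hL
  induction t using MuTerm.induction_napprox with
  | var x => simpa [hσ.var, hLvar, wordProd] using isLUBInContext_singleton (v := v) [x]
  | zero => simpa [hσ.zero, hLang.zero] using isLUBInContext_zero
  | one => simpa [hσ.one, hLang.one] using isLUBInContext_one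
  | add s t hs ht => simpa [hσ.add, hLang.add] using hs.add ht
  | mul s t hs ht => simpa [hσ.mul, hLang.mul] using hs.mul ht
  | mu x t ih => simpa [hLang.mu] using isLUBInContext_iSup ih (hK X eval hσ v · · x t)

/-- for every interpretation `σ` over a μ-continuous Chomsky
algebra `K` and every term `t`, `sup {σ̄(w) : w ∈ L_X(t)}` exists and equals
`σ(t)`. -/
theorem statement7 {X K : Type} [DecidableEq X] [Infinite X] [ChomskyAlgebra K]
    (hK : MuContinuous K) (eval : (X → K) → MuTerm X → K) (hσ : IsInterp eval)
    (v : X → K) (L : MuTerm X → Language X) (hL : IsCanonicalInterp L)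
    (t : MuTerm X) :
    IsLUB {y : K | ∃ w ∈ L t, y = wordProd v w} (eval v t) := by
  have h := isLUBInContext_of_isInterp hK hσ v hL t 1 1
  simp only [one_mul, mul_one, Set.image, eq_comm] at h
  exact h
end

section
/- The Greibach inequalities hold in all μ-continuous Chomsky algebras: for every interpretation σ over a μ-continuous Chomsky algebra and all terms s, r and distinct variables x, y with y not free in s or r, σ(μx.(s·(μy.(1 + r·y)))) ≤ σ(μx.(s + x·r)) and σ(μx.((μy.(1 + y·r))·s)) ≤ σ(μx.(s + r·x)). -/
/-!
Let `A = σ(μx.(s + x·r))` and `σ' = σ[x ↦ A]`, so that `σ'(s) ≤ A` and `A·σ'(r) ≤ A`.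
The `n`-th approximant of `μy.(1 + r·y)` evaluates to the geometric sum `∑_{i<n} σ'(r)^i`,
and `σ'(s)·σ'(r)^i ≤ A` by induction on `i`. By μ-continuity these bounds give
`σ'(s)·σ'(μy.(1 + r·y)) ≤ A`, so `A` is a prefixed point of `x ↦ s·μy.(1 + r·y)` and hence
lies above its least one. The second inequality is the mirror image.
-/

open Finset Function

theorem MuTerm.fv_subset_vars_s14 {X : Type} [DecidableEq X] : ∀ t : MuTerm X, t.fv ⊆ t.vars
  | .var _ | .zero | .one => by simp [MuTerm.fv, MuTerm.vars]
  | .add s t | .mul s t => union_subset_union (fv_subset_vars_s14 s) (fv_subset_vars_s14 t)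
  | .mu _ t => sdiff_subset.trans ((fv_subset_vars_s14 t).trans (subset_insert _ _))

section IdemSemiring

variable {α : Type*} [IdemSemiring α] {c A ρ : α}

theorem mul_pow_le_of_mul_le (hc : c ≤ A) (hA : A * ρ ≤ A) : ∀ n : ℕ, c * ρ ^ n ≤ A
  | 0 => by rwa [pow_zero, mul_one]
  | n + 1 => by grw [pow_succ, ← mul_assoc, mul_pow_le_of_mul_le hc hA n, hA]

theorem pow_mul_le_of_mul_le (hc : c ≤ A) (hA : ρ * A ≤ A) : ∀ n : ℕ, ρ ^ n * c ≤ A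
  | 0 => by rwa [pow_zero, one_mul]
  | n + 1 => by grw [pow_succ', mul_assoc, pow_mul_le_of_mul_le hc hA n, hA]

theorem mul_geom_sum_le (hc : c ≤ A) (hA : A * ρ ≤ A) (n : ℕ) :
    c * ∑ i ∈ range n, ρ ^ i ≤ A := by
  rw [mul_sum]
  exact sum_induction _ (· ≤ A) (fun _ _ => add_le) zero_le
    fun i _ => mul_pow_le_of_mul_le hc hA i

theorem geom_sum_mul_le (hc : c ≤ A) (hA : ρ * A ≤ A) (n : ℕ) :
    (∑ i ∈ range n, ρ ^ i) * c ≤ A := by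
  rw [sum_mul]
  exact sum_induction _ (· ≤ A) (fun _ _ => add_le) zero_le
    fun i _ => pow_mul_le_of_mul_le hc hA i

end IdemSemiring

namespace IsInterp

open MuTerm

variable {X C : Type} [DecidableEq X] [Infinite X] [ChomskyAlgebra C]
  {eval : (X → C) → MuTerm X → C}

theorem eval_mu_le (h : IsInterp eval) {v : X → C} {x : X} {t : MuTerm X} {a : C}
    (ha : eval (update v x a) t ≤ a) : eval v (.mu x t) ≤ a :=
  (h.mu v x t).2 ha

theorem eval_update_mu_le (h : IsInterp eval) (v : X → C) (x : X) (t : MuTerm X) :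
    eval (update v x (eval v (.mu x t))) t ≤ eval v (.mu x t) :=
  (h.mu v x t).1

theorem eval_mu_congr (h : IsInterp eval) {v w : X → C} {x y : X} {t u : MuTerm X}
    (htu : ∀ a, eval (update v x a) t = eval (update w y a) u) :
    eval v (.mu x t) = eval w (.mu y u) := by
  have hset : {a | eval (update w y a) u ≤ a} = {a | eval (update v x a) t ≤ a} :=
    Set.ext fun a => by simp only [Set.mem_ofPred_eq, htu]
  exact (h.mu v x t).unique (hset ▸ h.mu w y u)

theorem eval_congr (h : IsInterp eval) :
    ∀ (t : MuTerm X) {v w : X → C}, (∀ z ∈ t.fv, v z = w z) → eval v t = eval w t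
  | .var a, v, w, hvw => by rw [h.var, h.var]; exact hvw a (by simp [fv])
  | .zero, v, w, _ => by rw [h.zero, h.zero]
  | .one, v, w, _ => by rw [h.one, h.one]
  | .add p q, v, w, hvw => by
      rw [h.add, h.add, eval_congr h p fun z hz => hvw z (by simp [fv, hz]),
        eval_congr h q fun z hz => hvw z (by simp [fv, hz])]
  | .mul p q, v, w, hvw => by
      rw [h.mul, h.mul, eval_congr h p fun z hz => hvw z (by simp [fv, hz]),
        eval_congr h q fun z hz => hvw z (by simp [fv, hz])]
  | .mu a t, v, w, hvw => h.eval_mu_congr fun b => eval_congr h t fun z hz => by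
      by_cases hza : z = a
      · simp [hza]
      · simp only [update_of_ne hza]
        exact hvw z (by simp [fv, hz, hza])

theorem eval_update_of_notMem_fv (h : IsInterp eval) {t : MuTerm X} {y : X} (hy : y ∉ t.fv)
    (v : X → C) (a : C) : eval (update v y a) t = eval v t :=
  h.eval_congr t fun _ hz => update_of_ne (ne_of_mem_of_not_mem hz hy) _ _

theorem eval_rename (h : IsInterp eval) :
    ∀ (t : MuTerm X) {y z : X} (v : X → C), z ∉ t.vars →
      eval v (rename y z t) = eval (update v y (v z)) t
  | .var a, y, z, v, _ => by
      simp only [rename]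
      split_ifs with hay
      · rw [h.var, h.var, hay, update_self]
      · rw [h.var, h.var, update_of_ne hay]
  | .zero, y, z, v, _ => by rw [rename, h.zero, h.zero]
  | .one, y, z, v, _ => by rw [rename, h.one, h.one]
  | .add p q, y, z, v, hz => by
      rw [rename, h.add, h.add, eval_rename h p v fun e => hz (by simp [vars, e]),
        eval_rename h q v fun e => hz (by simp [vars, e])]
  | .mul p q, y, z, v, hz => by
      rw [rename, h.mul, h.mul, eval_rename h p v fun e => hz (by simp [vars, e]),
        eval_rename h q v fun e => hz (by simp [vars, e])]
  | .mu a t, y, z, v, hz => by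
      simp only [rename]
      split_ifs with hay
      · rw [← hay, h.eval_update_of_notMem_fv (by simp [fv])]
      · have hza : z ≠ a := fun e => hz (by simp [vars, e])
        refine h.eval_mu_congr fun b => ?_
        rw [eval_rename h t _ fun e => hz (by simp [vars, e]), update_of_ne hza,
          update_comm hay]

theorem eval_subst (h : IsInterp eval) (x : X) (u : MuTerm X) :
    ∀ (t : MuTerm X) (v : X → C), eval v (subst x u t) = eval (update v x (eval v u)) t
  | .var a, v => by
      rw [subst]
      split_ifs with hax
      · rw [h.var, hax, update_self]
      · rw [h.var, h.var, update_of_ne hax]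
  | .zero, v => by rw [subst, h.zero, h.zero]
  | .one, v => by rw [subst, h.one, h.one]
  | .add p q, v => by rw [subst, h.add, h.add, eval_subst h x u p, eval_subst h x u q]
  | .mul p q, v => by rw [subst, h.mul, h.mul, eval_subst h x u p, eval_subst h x u q]
  | .mu a t, v => by
      rw [subst]
      split_ifs with hax
      · rw [hax, h.eval_update_of_notMem_fv (by simp [fv])]
      · have hz := Classical.choose_spec (Infinite.exists_notMem_finset (vars t ∪ fv u ∪ {x}))
        set z := Classical.choose (Infinite.exists_notMem_finset (vars t ∪ fv u ∪ {x}))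
        simp only [mem_union, mem_singleton, not_or] at hz
        obtain ⟨⟨hzt, hzu⟩, hzx⟩ := hz
        refine h.eval_mu_congr fun b => ?_
        rw [eval_subst h x u (rename a z t), h.eval_update_of_notMem_fv hzu,
          h.eval_rename t _ hzt, update_of_ne hzx, update_self]
        -- `z` is fresh for `t`, so the update at `z` is invisible
        refine h.eval_congr t fun w hw => ?_
        have hwz : w ≠ z := ne_of_mem_of_not_mem (fv_subset_vars_s14 t hw) hzt
        simp only [update_apply, hwz, if_false]
  termination_by t => t.size
  decreasing_by all_goals simp only [size, size_rename]; omega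

theorem eval_napprox_succ (h : IsInterp eval) (v : X → C) (n : ℕ) (x : X) (t : MuTerm X) :
    eval v (napprox (n + 1) x t) = eval (update v x (eval v (napprox n x t))) t :=
  h.eval_subst x _ t v

theorem eval_napprox_one_add_mul_var (h : IsInterp eval) (v : X → C) {r : MuTerm X} {y : X}
    (hyr : y ∉ r.fv) :
    ∀ n : ℕ, eval v (napprox n y (.add .one (.mul r (.var y)))) = ∑ i ∈ range n, eval v r ^ i
  | 0 => by rw [napprox, h.zero, sum_range_zero]
  | n + 1 => by
      rw [h.eval_napprox_succ, h.add, h.mul, h.one, h.var, update_self,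
        h.eval_update_of_notMem_fv hyr, eval_napprox_one_add_mul_var h v hyr n, geom_sum_succ,
        add_comm]

theorem eval_napprox_one_add_var_mul (h : IsInterp eval) (v : X → C) {r : MuTerm X} {y : X}
    (hyr : y ∉ r.fv) :
    ∀ n : ℕ, eval v (napprox n y (.add .one (.mul (.var y) r))) = ∑ i ∈ range n, eval v r ^ i
  | 0 => by rw [napprox, h.zero, sum_range_zero]
  | n + 1 => by
      rw [h.eval_napprox_succ, h.add, h.mul, h.one, h.var, update_self,
        h.eval_update_of_notMem_fv hyr, eval_napprox_one_add_var_mul h v hyr n, sum_mul,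
        sum_range_succ', pow_zero, add_comm]
      simp only [pow_succ]

end IsInterp

theorem MuContinuous.mul_eval_mu_mul_le {C : Type} [ChomskyAlgebra C] (hC : MuContinuous C)
    {X : Type} [DecidableEq X] [Infinite X] {eval : (X → C) → MuTerm X → C} (h : IsInterp eval)
    {v : X → C} {c d a : C} {x : X} {t : MuTerm X}
    (hle : ∀ n, c * eval v (MuTerm.napprox n x t) * d ≤ a) : c * eval v (.mu x t) * d ≤ a :=
  (hC X eval h v c d x t).2 (by rintro _ ⟨n, rfl⟩; exact hle n)

section Greibach

open MuTerm

variable {X C : Type} [DecidableEq X] [Infinite X] [ChomskyAlgebra C]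
  {eval : (X → C) → MuTerm X → C}

theorem MuContinuous.greibach_mul_star (hC : MuContinuous C) (h : IsInterp eval) (v : X → C)
    {s r : MuTerm X} {x y : X} (hyr : y ∉ r.fv) :
    eval v (.mu x (.mul s (.mu y (.add .one (.mul r (.var y)))))) ≤
      eval v (.mu x (.add s (.mul (.var x) r))) := by
  set A := eval v (.mu x (.add s (.mul (.var x) r)))
  set v' := update v x A
  obtain ⟨hs, hr⟩ : eval v' s ≤ A ∧ A * eval v' r ≤ A := by
    simpa only [h.add, h.mul, h.var, update_self, add_le_iff] using
      h.eval_update_mu_le v x (.add s (.mul (.var x) r))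
  refine h.eval_mu_le ?_
  rw [h.mul, ← mul_one (_ * _)]
  refine hC.mul_eval_mu_mul_le h fun n => ?_
  rw [mul_one, h.eval_napprox_one_add_mul_var v' hyr]
  exact mul_geom_sum_le hs hr n

theorem MuContinuous.greibach_star_mul (hC : MuContinuous C) (h : IsInterp eval) (v : X → C)
    {s r : MuTerm X} {x y : X} (hyr : y ∉ r.fv) :
    eval v (.mu x (.mul (.mu y (.add .one (.mul (.var y) r))) s)) ≤
      eval v (.mu x (.add s (.mul r (.var x)))) := by
  set A := eval v (.mu x (.add s (.mul r (.var x))))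
  set v' := update v x A
  obtain ⟨hs, hr⟩ : eval v' s ≤ A ∧ eval v' r * A ≤ A := by
    simpa only [h.add, h.mul, h.var, update_self, add_le_iff] using
      h.eval_update_mu_le v x (.add s (.mul r (.var x)))
  refine h.eval_mu_le ?_
  rw [h.mul, ← one_mul (eval v' _)]
  refine hC.mul_eval_mu_mul_le h fun n => ?_
  rw [one_mul, h.eval_napprox_one_add_var_mul v' hyr]
  exact geom_sum_mul_le hs hr n

end Greibach

theorem statement14_general {X C : Type} [DecidableEq X] [Infinite X] [ChomskyAlgebra C]
    (hC : MuContinuous C) (eval : (X → C) → MuTerm X → C) (h : IsInterp eval)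
    (v : X → C) (s r : MuTerm X) (x y : X)
    (hyr : y ∉ MuTerm.fv r) :
    eval v (.mu x (.mul s (.mu y (.add .one (.mul r (.var y)))))) ≤
      eval v (.mu x (.add s (.mul (.var x) r))) ∧
    eval v (.mu x (.mul (.mu y (.add .one (.mul (.var y) r))) s)) ≤
      eval v (.mu x (.add s (.mul r (.var x)))) :=
  ⟨hC.greibach_mul_star h v hyr, hC.greibach_star_mul h v hyr⟩

/-- the Greibach inequalities
`μx.(s·(μy.(1 + r·y))) ≤ μx.(s + x·r)` and
`μx.((μy.(1 + y·r))·s) ≤ μx.(s + r·x)` hold in all μ-continuous Chomsky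
algebras, for distinct variables `x, y` with `y` not free in `s` or `r`. -/
theorem statement14 {X C : Type} [DecidableEq X] [Infinite X] [ChomskyAlgebra C]
    (hC : MuContinuous C) (eval : (X → C) → MuTerm X → C) (h : IsInterp eval)
    (v : X → C) (s r : MuTerm X) (x y : X) (hxy : x ≠ y)
    (hys : y ∉ MuTerm.fv s) (hyr : y ∉ MuTerm.fv r) :
    eval v (.mu x (.mul s (.mu y (.add .one (.mul r (.var y)))))) ≤
      eval v (.mu x (.add s (.mul (.var x) r))) ∧
    eval v (.mu x (.mul (.mu y (.add .one (.mul (.var y) r))) s)) ≤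
      eval v (.mu x (.add s (.mul r (.var x)))) :=
  statement14_general hC eval h v s r x y hyr
end
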